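/- If a trilinear array (Ω^{βγ})_{β,γ=1,2,3} of reals satisfies Ω = O·Ω·Oᵀ (as a 3×3 matrix) for every O ∈ SO(3), and additionally a three-index array Ω^{αβγ} satisfies Ω^{α··} = O·(Σ_β Ω^{β··} o_{αβ})·Oᵀ for every O ∈ SO(3), then Ω^{αβγ} = δ·ε_{αβγ} for some scalar δ, where ε is the Levi-Civita symbol. -/

import Mathlib

/-!
Write the hypothesis as invariance of the tensor `Ω` under `O ⊗ O ⊗ O` for `O ∈ SO(3)` and test it
on signed permutation matrices `diagonal s * P_σ`, which act by
`Ω a b c ↦ s a * s b * s c * Ω (σ a) (σ b) (σ c)`. Rotations by `π` about a coordinate axis kill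
every entry with a repeated index, and `sign σ • P_σ`, a rotation because the dimension is odd,
shows that `Ω (σ 0) (σ 1) (σ 2) = sign σ * Ω 0 1 2`. These are exactly the values of
`Ω 0 1 2 * leviCivita`.
-/

open Matrix

/-- The Levi-Civita symbol on `Fin 3`, defined via a determinant. -/
noncomputable def leviCivita (α β γ : Fin 3) : ℝ :=
  Matrix.det ![Pi.single α (1 : ℝ), Pi.single β 1, Pi.single γ 1]

open Equiv

section SignedPermutation

variable {n R : Type*} [Fintype n] [DecidableEq n] [CommRing R]

theorem conj_diagonal_mul_permMatrix (s : n → R) (σ : Perm n) (X : Matrix n n R) :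
    diagonal s * σ.permMatrix R * X * (diagonal s * σ.permMatrix R)ᵀ
      = diagonal s * X.submatrix σ σ * diagonal s := by
  rw [transpose_mul, transpose_permMatrix, diagonal_transpose, Matrix.mul_assoc (diagonal s),
    PEquiv.toMatrix_toPEquiv_mul, ← Matrix.mul_assoc, Matrix.mul_assoc _ (X.submatrix _ _),
    PEquiv.mul_toMatrix_toPEquiv]
  rfl

theorem diagonal_mul_permMatrix_mul_transpose {s : n → R} (hs : ∀ i, s i * s i = 1)
    (σ : Perm n) : diagonal s * σ.permMatrix R * (diagonal s * σ.permMatrix R)ᵀ = 1 := by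
  have := conj_diagonal_mul_permMatrix s σ 1
  rw [Matrix.mul_one] at this
  rw [this, submatrix_one_equiv, Matrix.mul_one, diagonal_mul_diagonal, ← diagonal_one]
  exact congrArg diagonal (funext hs)

theorem det_diagonal_mul_permMatrix (s : n → R) (σ : Perm n) :
    det (diagonal s * σ.permMatrix R) = (∏ i, s i) * Perm.sign σ := by
  rw [det_mul, det_diagonal, det_permutation]

end SignedPermutation

theorem Fin.exists_perm_three {a b c : Fin 3} (hab : a ≠ b) (hac : a ≠ c) (hbc : b ≠ c) :
    ∃ σ : Perm (Fin 3), σ 0 = a ∧ σ 1 = b ∧ σ 2 = c := by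
  have hinj : Function.Injective ![a, b, c] := by
    intro i j
    fin_cases i <;> fin_cases j <;> simp_all [eq_comm]
  exact ⟨.ofBijective _ (Finite.injective_iff_bijective.mp hinj), rfl, rfl, rfl⟩

theorem Fin.exists_signs_prod_eq_one (y : Fin 3) :
    ∃ s : Fin 3 → ℝ, (∀ i, s i * s i = 1) ∧ ∏ i, s i = 1 ∧ s y = -1 := by
  -- diagonals of the rotations by `π` about an axis other than `y`
  fin_cases y
  exacts [⟨![-1, -1, 1], by simp [Fin.forall_fin_succ, Fin.prod_univ_three]⟩,
    ⟨![-1, -1, 1], by simp [Fin.forall_fin_succ, Fin.prod_univ_three]⟩,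
    ⟨![1, -1, -1], by simp [Fin.forall_fin_succ, Fin.prod_univ_three]⟩]

theorem leviCivita_perm (σ : Perm (Fin 3)) : leviCivita (σ 0) (σ 1) (σ 2) = Perm.sign σ := by
  rw [leviCivita, ← det_permutation σ]
  congr 1
  funext i
  fin_cases i <;> exact (PEquiv.toMatrix_toPEquiv_apply σ _).symm

theorem leviCivita_eq_zero {a b c : Fin 3} (h : a = b ∨ a = c ∨ b = c) : leviCivita a b c = 0 := by
  rcases h with rfl | rfl | rfl
  · exact det_zero_of_row_eq (i := 0) (j := 1) (by decide) rfl
  · exact det_zero_of_row_eq (i := 0) (j := 2) (by decide) rfl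
  · exact det_zero_of_row_eq (i := 1) (j := 2) (by decide) rfl

def IsRotationInvariant {n : Type*} [Fintype n] [DecidableEq n] (Ω : n → Matrix n n ℝ) : Prop :=
  ∀ O : Matrix n n ℝ, O * Oᵀ = 1 → O.det = 1 → ∀ α, Ω α = O * (∑ β, O α β • Ω β) * Oᵀ

namespace IsRotationInvariant

section

variable {n : Type*} [Fintype n] [DecidableEq n] {Ω : n → Matrix n n ℝ}

theorem apply_eq_of_signedPerm (hΩ : IsRotationInvariant Ω) {s : n → ℝ}
    (hs : ∀ i, s i * s i = 1) {σ : Perm n} (hdet : (∏ i, s i) * Perm.sign σ = 1) (a b c : n) :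
    Ω a b c = s a * s b * s c * Ω (σ a) (σ b) (σ c) := by
  have hsum : ∑ β, (diagonal s * σ.permMatrix ℝ) a β • Ω β = s a • Ω (σ a) := by simp
  have := congrFun₂ (hΩ _ (diagonal_mul_permMatrix_mul_transpose hs σ)
    (by rw [det_diagonal_mul_permMatrix, hdet]) a) b c
  rw [this, hsum, conj_diagonal_mul_permMatrix]
  simp only [mul_diagonal, diagonal_mul, submatrix_apply, Matrix.smul_apply, smul_eq_mul]
  ring

theorem apply_perm (hΩ : IsRotationInvariant Ω) (hn : Odd (Fintype.card n)) (σ : Perm n)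
    (a b c : n) : Ω a b c = Perm.sign σ * Ω (σ a) (σ b) (σ c) := by
  have hsq : (Perm.sign σ : ℝ) * Perm.sign σ = 1 := by
    rw [← Int.cast_mul, ← Units.val_mul, Int.units_mul_self, Units.val_one, Int.cast_one]
  have hpow : (Perm.sign σ : ℝ) ^ Fintype.card n = Perm.sign σ := by
    obtain ⟨k, hk⟩ := hn
    rw [hk, pow_succ, pow_mul, sq, hsq, one_pow, one_mul]
  have := hΩ.apply_eq_of_signedPerm (fun _ => hsq) (σ := σ)
    (by rw [Finset.prod_const, Finset.card_univ, hpow, hsq]) a b c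
  rwa [hsq, one_mul] at this

end

theorem apply_eq_zero {Ω : Fin 3 → Matrix (Fin 3) (Fin 3) ℝ} (hΩ : IsRotationInvariant Ω)
    {a b c : Fin 3} (h : a = b ∨ a = c ∨ b = c) : Ω a b c = 0 := by
  -- `y` is the index occurring an odd number of times in `(a, b, c)`
  obtain ⟨y, hy⟩ : ∃ y, ∀ s : Fin 3 → ℝ, (∀ i, s i * s i = 1) → s a * s b * s c = s y := by
    rcases h with rfl | rfl | rfl
    exacts [⟨c, fun s hs => by rw [hs, one_mul]⟩,
      ⟨b, fun s hs => by rw [mul_right_comm, hs, one_mul]⟩,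
      ⟨a, fun s hs => by rw [mul_assoc, hs, mul_one]⟩]
  obtain ⟨s, hs, hprod, hsy⟩ := Fin.exists_signs_prod_eq_one y
  have := hΩ.apply_eq_of_signedPerm hs (σ := 1) (by rw [hprod, Perm.sign_one]; norm_num) a b c
  rw [hy s hs, hsy] at this
  simp only [Perm.one_apply] at this
  linarith

end IsRotationInvariant

theorem stmt_3_general (Ω : Fin 3 → Matrix (Fin 3) (Fin 3) ℝ)
    (h : ∀ O : Matrix (Fin 3) (Fin 3) ℝ, O * Oᵀ = 1 → O.det = 1 →
      ∀ α : Fin 3, Ω α = O * (∑ β : Fin 3, O α β • Ω β) * Oᵀ) :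
    ∃ δ : ℝ, ∀ α β γ : Fin 3, Ω α β γ = δ * leviCivita α β γ := by
  have hΩ : IsRotationInvariant Ω := h
  refine ⟨Ω 0 1 2, fun a b c => ?_⟩
  by_cases hrep : a = b ∨ a = c ∨ b = c
  · rw [hΩ.apply_eq_zero hrep, leviCivita_eq_zero hrep, mul_zero]
  simp only [not_or] at hrep
  obtain ⟨hab, hac, hbc⟩ := hrep
  obtain ⟨σ, rfl, rfl, rfl⟩ := Fin.exists_perm_three hab hac hbc
  have hσ : Ω (σ 0) (σ 1) (σ 2) = Perm.sign σ * Ω 0 1 2 := by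
    simpa [Perm.sign_inv] using hΩ.apply_perm (by decide) σ⁻¹ (σ 0) (σ 1) (σ 2)
  rw [hσ, leviCivita_perm, mul_comm]

theorem stmt_3 (Ω₂ : Matrix (Fin 3) (Fin 3) ℝ) (Ω : Fin 3 → Matrix (Fin 3) (Fin 3) ℝ)
    (h₂ : ∀ O : Matrix (Fin 3) (Fin 3) ℝ, O * Oᵀ = 1 → O.det = 1 → Ω₂ = O * Ω₂ * Oᵀ)
    (h : ∀ O : Matrix (Fin 3) (Fin 3) ℝ, O * Oᵀ = 1 → O.det = 1 →
      ∀ α : Fin 3, Ω α = O * (∑ β : Fin 3, O α β • Ω β) * Oᵀ) :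
    ∃ δ : ℝ, ∀ α β γ : Fin 3, Ω α β γ = δ * leviCivita α β γ :=
  stmt_3_general Ω h
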